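/- Let G be a clique-grid graph with representation f that admits a k-Steiner tree for terminal set R. Let T be a k-Steiner tree that first minimizes the number of edges between distinct cells and, among those, minimizes the number of Steiner vertices. Then every cell of G contains at most 24 Steiner vertices of T. -/

import Mathlib

open SimpleGraph

variable {V : Type*}

def IsSteinerTree (G : SimpleGraph V) (R : Set V) (T : G.Subgraph) : Prop :=
  T.coe.IsTree ∧ R ⊆ T.verts

def IsRepresentation (G : SimpleGraph V) (f : V → ℤ × ℤ) : Prop :=
  (∀ u v, u ≠ v → f u = f v → G.Adj u v) ∧
  (∀ u v, G.Adj u v → |(f u).1 - (f v).1| ≤ 2 ∧ |(f u).2 - (f v).2| ≤ 2)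

/-- The edges of `T` whose endpoints lie in distinct cells. -/
def interCellEdges (G : SimpleGraph V) (f : V → ℤ × ℤ) (T : G.Subgraph) : Set (Sym2 V) :=
  {e ∈ T.edgeSet | ∃ u v, e = s(u, v) ∧ f u ≠ f v}

/-!
Both steps are edge exchanges in the tree `T`, using that every cell is a clique. If all
`T`-neighbours of a Steiner vertex `u` lay in its own cell, the edges at `u` could be rerouted
inside that cell until `u` is a leaf and then `u` deleted, which creates no inter-cell edge and
saves a Steiner vertex. So every Steiner vertex of the cell `c` has a `T`-neighbour in one of the
24 cells around `c`. If two Steiner vertices `u ≠ w` of `c` had such neighbours `y`, `z` in a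
common cell, removing the inter-cell edge `wz` and reconnecting the two sides by `uw` or by `yz`
would save an inter-cell edge. Hence these cells are pairwise distinct, and there are at most 24.
-/

namespace SimpleGraph

variable {W : Type*} {H K : SimpleGraph W}

lemma reachable_le_of_adj_le (h : H.Adj ≤ K.Reachable) : H.Reachable ≤ K.Reachable := by
  rw [reachable_eq_reflTransGen, reachable_eq_reflTransGen] at *
  exact Relation.reflTransGen_closed h

lemma reachable_deleteEdges_or_of_reachable {a b x : W} (h : H.Reachable x a) :
    (H.deleteEdges {s(a, b)}).Reachable x a ∨ (H.deleteEdges {s(a, b)}).Reachable x b := by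
  rw [reachable_eq_reflTransGen] at h
  induction h using Relation.ReflTransGen.head_induction_on with
  | refl => exact .inl .rfl
  | @head x y hxy _ ih =>
    by_cases he : s(x, y) = s(a, b)
    · rcases Sym2.eq_iff.mp he with ⟨rfl, -⟩ | ⟨rfl, -⟩
      · exact .inl .rfl
      · exact .inr .rfl
    · have hxy' : (H.deleteEdges {s(a, b)}).Adj x y := deleteEdges_adj.mpr ⟨hxy, he⟩
      exact ih.imp hxy'.reachable.trans hxy'.reachable.trans

lemma IsTree.sup_edge_deleteEdges {a b a' b' : W} (hH : H.IsTree) (hab : H.Adj a b)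
    (ha' : (H.deleteEdges {s(a, b)}).Reachable a a')
    (hb' : (H.deleteEdges {s(a, b)}).Reachable b b') :
    (H.deleteEdges {s(a, b)} ⊔ edge a' b').IsTree := by
  set H₀ := H.deleteEdges {s(a, b)}
  have hsep : ¬ H₀.Reachable a' b' := fun h =>
    isBridge_iff.mp (isAcyclic_iff_forall_adj_isBridge.mp hH.isAcyclic hab)
      (ha'.trans (h.trans hb'.symm))
  refine ⟨?_, (hH.isAcyclic.anti (deleteEdges_le _)).sup_edge_of_not_reachable hsep⟩
  have : Nonempty W := ⟨a⟩
  refine .mk fun x y =>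
    reachable_le_of_adj_le (fun x y hxy => ?_) x y (hH.connected.preconnected x y)
  have hle : H₀ ≤ H₀ ⊔ edge a' b' := le_sup_left
  have hab' : (H₀ ⊔ edge a' b').Reachable a b :=
    ((ha'.mono hle).trans (Adj.reachable (Or.inr ((edge_adj _ _ _ _).mpr
      ⟨.inl ⟨rfl, rfl⟩, fun h => hsep (h ▸ .rfl)⟩)))).trans (hb'.symm.mono hle)
  by_cases he : s(x, y) = s(a, b)
  · rcases Sym2.eq_iff.mp he with ⟨rfl, rfl⟩ | ⟨rfl, rfl⟩
    · exact hab'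
    · exact hab'.symm
  · exact Adj.reachable (G := H₀ ⊔ edge a' b') (.inl (deleteEdges_adj.mpr ⟨hxy, he⟩))

variable {G : SimpleGraph V}

namespace Subgraph

def exchangeEdge (T : G.Subgraph) (a b : V) {a' b' : V} (h : G.Adj a' b') (ha' : a' ∈ T.verts)
    (hb' : b' ∈ T.verts) : G.Subgraph where
  verts := T.verts
  Adj x y := (T.Adj x y ∧ s(x, y) ≠ s(a, b)) ∨ s(x, y) = s(a', b')
  adj_sub := by
    rintro x y (⟨hxy, -⟩ | hxy)
    · exact T.adj_sub hxy
    · rcases Sym2.eq_iff.mp hxy with ⟨rfl, rfl⟩ | ⟨rfl, rfl⟩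
      exacts [h, h.symm]
  edge_vert := by
    rintro x y (⟨hxy, -⟩ | hxy)
    · exact T.edge_vert hxy
    · rcases Sym2.eq_iff.mp hxy with ⟨rfl, -⟩ | ⟨rfl, -⟩
      exacts [ha', hb']
  symm := ⟨fun x y hxy => by simpa only [Sym2.eq_swap, T.adj_comm] using hxy⟩

variable {T : G.Subgraph} {a b a' b' : V} {h : G.Adj a' b'} {ha' : a' ∈ T.verts}
  {hb' : b' ∈ T.verts}

@[simp] lemma exchangeEdge_verts : (T.exchangeEdge a b h ha' hb').verts = T.verts := rfl

@[simp] lemma exchangeEdge_adj {x y : V} : (T.exchangeEdge a b h ha' hb').Adj x y ↔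
    (T.Adj x y ∧ s(x, y) ≠ s(a, b)) ∨ s(x, y) = s(a', b') := Iff.rfl

lemma mem_edgeSet_exchangeEdge {e : Sym2 V} : e ∈ (T.exchangeEdge a b h ha' hb').edgeSet ↔
    (e ∈ T.edgeSet ∧ e ≠ s(a, b)) ∨ e = s(a', b') := by
  induction e with | h x y => exact Iff.rfl

lemma isTree_coe_exchangeEdge (hT : T.coe.IsTree) (hab : T.Adj a b)
    (ha : (T.coe.deleteEdges {s(⟨a, T.edge_vert hab⟩, ⟨b, T.edge_vert hab.symm⟩)}).Reachable
      ⟨a, T.edge_vert hab⟩ ⟨a', ha'⟩)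
    (hb : (T.coe.deleteEdges {s(⟨a, T.edge_vert hab⟩, ⟨b, T.edge_vert hab.symm⟩)}).Reachable
      ⟨b, T.edge_vert hab.symm⟩ ⟨b', hb'⟩) :
    (T.exchangeEdge a b h ha' hb').coe.IsTree := by
  let e : T.coe.deleteEdges {s(⟨a, T.edge_vert hab⟩, ⟨b, T.edge_vert hab.symm⟩)} ⊔
      edge ⟨a', ha'⟩ ⟨b', hb'⟩ ≃g (T.exchangeEdge a b h ha' hb').coe :=
    { Equiv.setCongr exchangeEdge_verts.symm with
      map_rel_iff' := fun {x y} => by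
        obtain ⟨x, hx⟩ := x
        obtain ⟨y, hy⟩ := y
        simp only [Equiv.setCongr_apply, SimpleGraph.sup_adj, SimpleGraph.deleteEdges_adj,
          edge_adj, coe_adj, exchangeEdge_adj, Set.mem_singleton_iff, Sym2.eq_iff,
          Subtype.mk.injEq]
        grind [h.ne, Subgraph.Adj.ne] }
  exact e.isTree_iff.mp (hT.sup_edge_deleteEdges hab ha hb)

lemma isTree_coe_deleteVerts_of_subsingleton {T : G.Subgraph} (hT : T.coe.IsTree)
    {u : V} (hu : (T.neighborSet u).Subsingleton) (hne : (T.verts \ {u}).Nonempty) :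
    (T.deleteVerts {u}).coe.IsTree := by
  rw [(Subgraph.coeDeleteVertsIso {u}).isTree_iff]
  refine ⟨connected_iff _ |>.mpr ⟨hT.connected.preconnected.induce_of_degree_eq_one ?_, ?_⟩,
    hT.isAcyclic.induce _⟩
  · rintro ⟨v, hv⟩ hvu x hx y hy
    simp only [Set.mem_ofPred_eq, Set.mem_singleton_iff, not_not] at hvu
    subst hvu
    exact Subtype.ext (hu hx hy)
  · obtain ⟨v, hvT, hvu⟩ := hne
    exact ⟨⟨⟨v, hvT⟩, hvu⟩⟩

end Subgraph
end SimpleGraph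

section CliqueGrid

variable {G : SimpleGraph V} {f : V → ℤ × ℤ}

def IsInterCellMinimal (G : SimpleGraph V) (f : V → ℤ × ℤ) (T : G.Subgraph) : Prop :=
  ∀ T' : G.Subgraph, T'.coe.IsTree → T'.verts = T.verts →
    (interCellEdges G f T).ncard ≤ (interCellEdges G f T').ncard

lemma interCellEdges_mono {T₁ T₂ : G.Subgraph} (h : T₁ ≤ T₂) :
    interCellEdges G f T₁ ⊆ interCellEdges G f T₂ :=
  fun _ ⟨he, hc⟩ => ⟨Subgraph.edgeSet_mono h he, hc⟩

lemma interCellEdges_exchangeEdge_subset {T : G.Subgraph} {a b a' b' : V} {h : G.Adj a' b'}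
    {ha' : a' ∈ T.verts} {hb' : b' ∈ T.verts} (hf : f a' = f b') :
    interCellEdges G f (T.exchangeEdge a b h ha' hb') ⊆ interCellEdges G f T \ {s(a, b)} := by
  rintro _ ⟨he, x, y, rfl, hxy⟩
  rcases Subgraph.mem_edgeSet_exchangeEdge.mp he with ⟨he, hne⟩ | he
  · exact ⟨⟨he, x, y, rfl, hxy⟩, hne⟩
  · rcases Sym2.eq_iff.mp he with ⟨rfl, rfl⟩ | ⟨rfl, rfl⟩
    exacts [(hxy hf).elim, (hxy hf.symm).elim]

/-- Replace an edge `u v₂` by `v₁ v₂` inside the cell until `u` is a leaf, then delete `u`. -/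
lemma exists_isTree_verts_eq_diff_singleton (hclique : ∀ x y, x ≠ y → f x = f y → G.Adj x y)
    [Finite V] {T : G.Subgraph} (hT : T.coe.IsTree) {u : V}
    (hu : ∀ x, T.Adj u x → f x = f u) (hne : (T.verts \ {u}).Nonempty) :
    ∃ T' : G.Subgraph, T'.coe.IsTree ∧ T'.verts = T.verts \ {u} ∧
      interCellEdges G f T' ⊆ interCellEdges G f T := by
  induction hn : (T.neighborSet u).ncard using Nat.strong_induction_on generalizing T with
  | _ n ih =>
  rcases (T.neighborSet u).subsingleton_or_nontrivial with hleaf | ⟨v₁, hv₁, v₂, hv₂, hv₁₂⟩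
  · exact ⟨T.deleteVerts {u}, Subgraph.isTree_coe_deleteVerts_of_subsingleton hT hleaf hne,
      Subgraph.deleteVerts_verts, interCellEdges_mono Subgraph.deleteVerts_le⟩
  replace hv₁ : T.Adj u v₁ := hv₁
  replace hv₂ : T.Adj u v₂ := hv₂
  have hv₁T := T.edge_vert hv₁.symm
  have hv₂T := T.edge_vert hv₂.symm
  have huv₁ : u ≠ v₁ := (T.adj_sub hv₁).ne
  have huv₂ : u ≠ v₂ := (T.adj_sub hv₂).ne
  have hf : f v₁ = f v₂ := (hu _ hv₁).trans (hu _ hv₂).symm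
  have hG : G.Adj v₁ v₂ := hclique _ _ hv₁₂ hf
  have hT₁ : (T.exchangeEdge u v₂ hG hv₁T hv₂T).coe.IsTree := by
    refine Subgraph.isTree_coe_exchangeEdge hT hv₂ (Adj.reachable ?_) .rfl
    simp [huv₁.symm, hv₁₂, hv₁]
  have hN : (T.exchangeEdge u v₂ hG hv₁T hv₂T).neighborSet u = T.neighborSet u \ {v₂} := by
    ext x
    simp only [Subgraph.mem_neighborSet, Subgraph.exchangeEdge_adj, Set.mem_sdiff,
      Set.mem_singleton_iff, Sym2.eq_iff]
    grind
  obtain ⟨T₂, hT₂, hV₂, hE₂⟩ := ih _ (hn ▸ hN ▸ Set.ncard_sdiff_singleton_lt_of_mem hv₂) hT₁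
    (fun x hx => hu x (hN.subset hx).1) hne rfl
  exact ⟨T₂, hT₂, hV₂,
    hE₂.trans ((interCellEdges_exchangeEdge_subset hf).trans Set.sdiff_subset)⟩

/-- An inter-cell edge `ab` cannot be exchanged for an edge `a'b'` inside a cell. -/
lemma IsInterCellMinimal.not_reachable_deleteEdges [Finite V]
    (hclique : ∀ x y, x ≠ y → f x = f y → G.Adj x y) {T : G.Subgraph}
    (hmin : IsInterCellMinimal G f T) (hT : T.coe.IsTree) {a b a' b' : V} (hab : T.Adj a b)
    (hfab : f a ≠ f b) (hf' : f a' = f b') (ha' : a' ∈ T.verts) (hb' : b' ∈ T.verts)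
    (ha : (T.coe.deleteEdges {s(⟨a, T.edge_vert hab⟩, ⟨b, T.edge_vert hab.symm⟩)}).Reachable
      ⟨a, T.edge_vert hab⟩ ⟨a', ha'⟩) :
    ¬ (T.coe.deleteEdges {s(⟨a, T.edge_vert hab⟩, ⟨b, T.edge_vert hab.symm⟩)}).Reachable
      ⟨b, T.edge_vert hab.symm⟩ ⟨b', hb'⟩ := by
  intro hb
  have hbridge := isAcyclic_iff_forall_adj_isBridge.mp hT.isAcyclic
    (show T.coe.Adj ⟨a, T.edge_vert hab⟩ ⟨b, T.edge_vert hab.symm⟩ from hab)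
  have hne : a' ≠ b' := by
    rintro rfl
    exact isBridge_iff.mp hbridge (ha.trans hb.symm)
  have hG := hclique _ _ hne hf'
  have hle := hmin (T.exchangeEdge a b hG ha' hb')
    (Subgraph.isTree_coe_exchangeEdge hT hab ha hb) rfl
  have hsub := interCellEdges_exchangeEdge_subset (h := hG) (ha' := ha') (hb' := hb') (a := a)
    (b := b) hf'
  have hlt := (Set.ncard_le_ncard hsub).trans_lt
    (Set.ncard_sdiff_singleton_lt_of_mem (⟨hab, a, b, rfl, hfab⟩ : s(a, b) ∈ interCellEdges G f T))
  omega

/-- Remove the edge `wz`: if `u` lies on the side of `z`, reconnect by `uw`; otherwise `y` lies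
on the side of `w`, and reconnect by `yz`. -/
lemma IsInterCellMinimal.cell_ne_of_adj [Finite V]
    (hclique : ∀ x y, x ≠ y → f x = f y → G.Adj x y) {T : G.Subgraph}
    (hmin : IsInterCellMinimal G f T) (hT : T.coe.IsTree) {u w y z : V} (huw : u ≠ w)
    (hfuw : f u = f w) (huy : T.Adj u y) (hwz : T.Adj w z) (hz : f z ≠ f w) :
    f y ≠ f z := by
  intro hyz
  have hu := T.edge_vert huy
  have hw := T.edge_vert hwz
  have hzw := hwz.symm
  rcases reachable_deleteEdges_or_of_reachable (b := ⟨w, hw⟩)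
      (hT.connected.preconnected ⟨u, hu⟩ ⟨z, T.edge_vert hzw⟩) with hside | hside
  · exact hmin.not_reachable_deleteEdges hclique hT hzw hz hfuw hu hw hside.symm .rfl
  · have huy' : (T.coe.deleteEdges {s(⟨z, T.edge_vert hzw⟩, ⟨w, hw⟩)}).Adj ⟨u, hu⟩
        ⟨y, T.edge_vert huy.symm⟩ := by
      have : u ≠ z := fun h => hz (h ▸ hfuw)
      simp [huy, this, huw]
    exact hmin.not_reachable_deleteEdges hclique hT hzw hz hyz.symm
      (T.edge_vert hzw) (T.edge_vert huy.symm) .rfl (hside.symm.trans huy'.reachable)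

lemma exists_adj_cell_ne_of_minimal [Finite V] (hclique : ∀ x y, x ≠ y → f x = f y → G.Adj x y)
    {R : Set V} {k : ℕ} {T : G.Subgraph} (hT : IsSteinerTree G R T ∧ (T.verts \ R).ncard ≤ k)
    (hmin1 : ∀ T' : G.Subgraph, IsSteinerTree G R T' ∧ (T'.verts \ R).ncard ≤ k →
      (interCellEdges G f T).ncard ≤ (interCellEdges G f T').ncard)
    (hmin2 : ∀ T' : G.Subgraph, IsSteinerTree G R T' ∧ (T'.verts \ R).ncard ≤ k →
      (interCellEdges G f T').ncard = (interCellEdges G f T).ncard →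
      (T.verts \ R).ncard ≤ (T'.verts \ R).ncard)
    {u : V} (hu : u ∈ T.verts \ R) (hne : (T.verts \ {u}).Nonempty) :
    ∃ y, T.Adj u y ∧ f y ≠ f u := by
  by_contra! hcell
  obtain ⟨⟨hTtree, hRT⟩, hk⟩ := hT
  obtain ⟨T', hT', hV', hE'⟩ := exists_isTree_verts_eq_diff_singleton hclique hTtree hcell hne
  have hsteiner : T'.verts \ R = (T.verts \ R) \ {u} := by
    rw [hV', Set.sdiff_sdiff_comm]
  have hlt : (T'.verts \ R).ncard < (T.verts \ R).ncard :=
    hsteiner ▸ Set.ncard_sdiff_singleton_lt_of_mem hu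
  have hT'k : IsSteinerTree G R T' ∧ (T'.verts \ R).ncard ≤ k := by
    refine ⟨⟨hT', hV' ▸ fun r hr => ⟨hRT hr, ?_⟩⟩, hlt.le.trans hk⟩
    rintro rfl
    exact hu.2 hr
  have hE := (hmin1 T' hT'k).antisymm' (Set.ncard_le_ncard hE')
  exact (hmin2 T' hT'k hE).not_gt hlt

lemma ncard_le_24_of_injOn {ι : Type*} {S : Set ι} {g : ι → ℤ × ℤ} {c : ℤ × ℤ}
    (hg : ∀ v ∈ S, |c.1 - (g v).1| ≤ 2 ∧ |c.2 - (g v).2| ≤ 2 ∧ g v ≠ c) (hinj : S.InjOn g) :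
    S.ncard ≤ 24 := by
  set D := (Finset.Icc (c.1 - 2) (c.1 + 2) ×ˢ Finset.Icc (c.2 - 2) (c.2 + 2)).erase c
  have hD : D.card = 24 := by
    rw [Finset.card_erase_of_mem (by simp), Finset.card_product, Int.card_Icc, Int.card_Icc,
      show c.1 + 2 + 1 - (c.1 - 2) = 5 by ring, show c.2 + 2 + 1 - (c.2 - 2) = 5 by ring]
    rfl
  calc S.ncard ≤ (D : Set (ℤ × ℤ)).ncard := Set.ncard_le_ncard_of_injOn g (fun v hv => ?_) hinj
    _ = 24 := by rw [Set.ncard_coe_finset, hD]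
  obtain ⟨h1, h2, hc⟩ := hg v hv
  rw [abs_le] at h1 h2
  simp only [D, Finset.coe_erase, Set.mem_sdiff, Finset.mem_coe, Finset.mem_product,
    Finset.mem_Icc, Set.mem_singleton_iff]
  exact ⟨⟨⟨by linarith, by linarith⟩, by linarith, by linarith⟩, hc⟩

end CliqueGrid

/-- If a `k`-Steiner tree exists and `T` is a `k`-Steiner tree that first minimizes the number
of inter-cell edges and, among those, minimizes the number of Steiner vertices, then every cell
contains at most 24 Steiner vertices of `T`. -/
theorem stmt4 [Fintype V] (G : SimpleGraph V) (f : V → ℤ × ℤ) (hf : IsRepresentation G f)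
    (R : Set V) (k : ℕ) (T : G.Subgraph)
    (hT : IsSteinerTree G R T ∧ (T.verts \ R).ncard ≤ k)
    (hmin1 : ∀ T' : G.Subgraph, IsSteinerTree G R T' ∧ (T'.verts \ R).ncard ≤ k →
      (interCellEdges G f T).ncard ≤ (interCellEdges G f T').ncard)
    (hmin2 : ∀ T' : G.Subgraph, IsSteinerTree G R T' ∧ (T'.verts \ R).ncard ≤ k →
      (interCellEdges G f T').ncard = (interCellEdges G f T).ncard →
      (T.verts \ R).ncard ≤ (T'.verts \ R).ncard)
    (c : ℤ × ℤ) :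
    {v | v ∈ T.verts \ R ∧ f v = c}.ncard ≤ 24 := by
  by_contra! hS
  set S := {v | v ∈ T.verts \ R ∧ f v = c}
  have hout : ∀ u ∈ S, ∃ y, T.Adj u y ∧ f y ≠ f u := by
    intro u hu
    obtain ⟨w, hw, hwu⟩ := Set.exists_ne_of_one_lt_ncard (s := S) (by omega) u
    exact exists_adj_cell_ne_of_minimal hf.1 hT hmin1 hmin2 hu.1 ⟨w, hw.1.1, hwu⟩
  choose! y hy using hout
  have hmin : IsInterCellMinimal G f T := fun T' hT' hV =>
    hmin1 T' ⟨⟨hT', hV ▸ hT.1.2⟩, hV ▸ hT.2⟩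
  refine hS.not_ge
    (ncard_le_24_of_injOn (g := f ∘ y) (c := c) (fun u hu => ?_) fun u hu w hw hyw => ?_)
  · obtain ⟨h1, h2⟩ := hf.2 u (y u) ((hy u hu).1.adj_sub)
    exact ⟨hu.2 ▸ h1, hu.2 ▸ h2, hu.2 ▸ (hy u hu).2⟩
  · by_contra huw
    exact hmin.cell_ne_of_adj hf.1 hT.1.1 huw (hu.2.trans hw.2.symm) (hy u hu).1 (hy w hw).1
      (hy w hw).2 hyw
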